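/- arXiv:2105.07746 — 3 statements merged into one kernel-verified Lean document; each statement's English description precedes it below -/
import Mathlib

section
/- For every regular uncountable cardinal κ, the unbounding number b_κ (defined modulo the bounded ideal) equals the club unbounding number b^cl_κ (defined modulo the non-stationary ideal). -/
open Set Cardinal

/-- `c` is a club in the well-ordered type `α` (thought of as the cardinal `κ = #α`):
it is closed (contains the supremum of each of its nonempty bounded subsets) and unbounded. -/
def IsClubIn {α : Type*} [LinearOrder α] (c : Set α) : Prop :=
  (∀ s ⊆ c, s.Nonempty → ∀ a : α, IsLUB s a → a ∈ c) ∧ ∀ a : α, ∃ b ∈ c, a < b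

/-- `x` is stationary: it meets every club. -/
def IsStatIn {α : Type*} [LinearOrder α] (x : Set α) : Prop :=
  ∀ c : Set α, IsClubIn c → (x ∩ c).Nonempty

/-- The unbounding number `b_κ`, defined modulo the bounded ideal:
the least cardinality of a family `B ⊆ κ^κ` such that for every `g` there is `f ∈ B`
with `f ≰* g`, i.e. `{a | g a < f a}` is unbounded. -/
noncomputable def bddUnboundingNumber (α : Type*) [LinearOrder α] : Cardinal :=
  sInf { c : Cardinal |
    ∃ B : Set (α → α), (∀ g : α → α, ∃ f ∈ B, ¬ BddAbove {a : α | g a < f a}) ∧ c = #B }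

/-- The club unbounding number `b^cl_κ`, defined modulo the non-stationary ideal:
the least cardinality of a family `B ⊆ κ^κ` such that for every `g` there is `f ∈ B`
with `f ≰*_cl g`, i.e. `{a | g a < f a}` is stationary. -/
noncomputable def clubUnboundingNumber (α : Type*) [LinearOrder α] : Cardinal :=
  sInf { c : Cardinal |
    ∃ B : Set (α → α), (∀ g : α → α, ∃ f ∈ B, IsStatIn {a : α | g a < f a}) ∧ c = #B }

/-!
`b_κ ≤ b^cl_κ` because stationary sets are unbounded. For the converse suppose every family of
size `b_κ` is dominated modulo clubs, and let `B` be an unbounded family of that size. Dominate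
the monotone majorants of the `f ∈ B` by `g₀` on clubs `C_f`. Shrinking each `C_f` through `ω`
rounds, each round dominating the "next element" functions of the current clubs modulo clubs,
gives clubs `E_f ⊆ C_f` and one monotone `h` with `next_{E_f}(d) ≤ h d` for `d ∈ E_f`; the
supremum of the `ω` next elements of `d` lies in every stage, which is why `ω` rounds suffice.
Then for `a` beyond `min E_f` the next point of `E_f` after `a` is at most `h a`, so
`f a ≤ ĝ₀ (h a)` with `ĝ₀` a monotone majorant of `g₀`: `ĝ₀ ∘ h` bounds `B`, a contradiction.
-/

open Order
open scoped Ordinal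

theorem Cardinal.IsRegular.isRegularCardinalOrder {α : Type*} [LinearOrder α] [WellFoundedLT α]
    (hreg : (#α).IsRegular) (hinit : ∀ a : α, #(Iio a) < #α) : IsRegularCardinalOrder α := by
  have htype : typeLT α = (#α).ord := by
    refine le_antisymm (le_of_forall_lt fun o ho => ?_) (ord_le_type _)
    obtain ⟨a, rfl⟩ := Ordinal.typein_surj _ ho
    exact lt_ord.2 (hinit a)
  have hcof : cof α = #α := by rw [← Ordinal.cof_type, htype, hreg.cof_ord]
  exact ⟨by rw [htype, hcof]⟩

section UnboundingNumbers
variable {α : Type*} [LinearOrder α]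

theorem isClubIn_iff_isClub [NoMaxOrder α] {c : Set α} : IsClubIn c ↔ IsClub c := by
  refine ⟨fun hc => ⟨fun s hs hne _ a ha => hc.1 s hs hne a ha,
    fun a => (hc.2 a).imp fun _ hb => ⟨hb.1, hb.2.le⟩⟩,
    fun hc => ⟨fun s hs hne a ha => hc.isLUB_mem hs hne ha, fun a => ?_⟩⟩
  obtain ⟨a', ha'⟩ := exists_gt a
  obtain ⟨b, hb, hab⟩ := hc.isCofinal a'
  exact ⟨b, hb, ha'.trans_le hab⟩

theorem isStatIn_iff_isStationary [NoMaxOrder α] {x : Set α} : IsStatIn x ↔ IsStationary x := by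
  simp only [IsStatIn, IsStationary, isClubIn_iff_isClub]

theorem isClubIn_Ioi [NoMaxOrder α] (u : α) : IsClubIn (Ioi u) := by
  refine ⟨fun s hs ⟨x, hx⟩ a ha => (hs hx).trans_le (ha.1 hx), fun a => ?_⟩
  obtain ⟨b, hb⟩ := exists_gt (max u a)
  exact ⟨b, (le_max_left u a).trans_lt hb, (le_max_right u a).trans_lt hb⟩

theorem IsStatIn.not_bddAbove [NoMaxOrder α] {x : Set α} (hx : IsStatIn x) : ¬ BddAbove x :=
  fun ⟨u, hu⟩ => by
    obtain ⟨a, hax, hua⟩ := hx _ (isClubIn_Ioi u)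
    exact (hu hax).not_gt hua

theorem exists_clubUnbounding_family [Nonempty α] [NoMaxOrder α] :
    ∃ B : Set (α → α), ∀ g : α → α, ∃ f ∈ B, IsStatIn {a : α | g a < f a} := by
  refine ⟨univ, fun g => ⟨fun a => (exists_gt (g a)).choose, mem_univ _, fun c hc => ?_⟩⟩
  obtain ⟨b, hb, -⟩ := hc.2 (g (Classical.arbitrary α))
  exact ⟨b, (exists_gt (g b)).choose_spec, hb⟩

theorem bddUnboundingNumber_le_clubUnboundingNumber [Nonempty α] [NoMaxOrder α] :
    bddUnboundingNumber α ≤ clubUnboundingNumber α := by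
  obtain ⟨B, hB⟩ := exists_clubUnbounding_family (α := α)
  refine csInf_le_csInf' ⟨_, B, hB, rfl⟩ ?_
  rintro _ ⟨B, hB, rfl⟩
  exact ⟨B, fun g => (hB g).imp fun f hf => ⟨hf.1, hf.2.not_bddAbove⟩, rfl⟩

theorem exists_forall_not_isStatIn_of_mk_lt {G : Set (α → α)} (hG : #G < clubUnboundingNumber α) :
    ∃ g : α → α, ∀ f ∈ G, ¬ IsStatIn {a | g a < f a} := by
  by_contra! h
  exact notMem_of_lt_csInf' hG ⟨G, h, rfl⟩

end UnboundingNumbers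

section RegularCardinalOrder
variable {α : Type*} [LinearOrder α] [WellFoundedLT α]

theorem noMaxOrder_of_aleph0_le [IsRegularCardinalOrder α] (hα : ℵ₀ ≤ #α) : NoMaxOrder α := by
  refine ⟨fun a => ?_⟩
  by_contra! h
  have huniv : Iic a = Set.univ := eq_univ_of_forall h
  exact (mk_Iic_lt a ord_cardinalMk hα).ne (by rw [huniv, mk_univ])

theorem bddAbove_of_mk_lt [IsRegularCardinalOrder α] {s : Set α} (hs : #s < #α) : BddAbove s :=
  .of_not_isCofinal fun h => (cof_le h).not_gt (cof_eq_cardinalMk (α := α) ▸ hs)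

theorem bddAbove_range_of_aleph0_lt [IsRegularCardinalOrder α] (hα : ℵ₀ < #α) (u : ℕ → α) :
    BddAbove (range u) :=
  bddAbove_of_mk_lt ((countable_range u).le_aleph0.trans_lt hα)

variable [Nonempty α]
attribute [local instance] WellFoundedLT.toOrderBot
  WellFoundedLT.conditionallyCompleteLinearOrderBot

theorem exists_monotone_ge [IsRegularCardinalOrder α] (hα : ℵ₀ ≤ #α) (f : α → α) :
    ∃ f' : α → α, Monotone f' ∧ f ≤ f' := by
  have hbdd (a : α) : BddAbove (f '' Iic a) :=
    bddAbove_of_mk_lt (mk_image_le.trans_lt (mk_Iic_lt a ord_cardinalMk hα))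
  refine ⟨fun a => sSup (f '' Iic a), fun a b hab => ?_,
    fun a => le_csSup (hbdd a) ⟨a, le_rfl, rfl⟩⟩
  exact csSup_le_csSup (hbdd b) ⟨f a, a, le_rfl, rfl⟩ (image_mono (Iic_subset_Iic.2 hab))

theorem csSup_range_mem_iInter {S : ℕ → Set α} (hS : ∀ n, IsClub (S n)) (hanti : Antitone S)
    {p : ℕ → α} (hp : Monotone p) (hmem : ∀ n, p n ∈ S n) (hbdd : BddAbove (range p)) :
    sSup (range p) ∈ ⋂ n, S n := by
  refine mem_iInter.2 fun m => (hS m).isLUB_mem (t := range fun n => p (n + m)) ?_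
    (range_nonempty _) ⟨?_, fun b hb => csSup_le (range_nonempty _) ?_⟩
  · rintro _ ⟨n, rfl⟩
    exact hanti (Nat.le_add_left m n) (hmem _)
  · rintro _ ⟨n, rfl⟩
    exact le_csSup hbdd ⟨_, rfl⟩
  · rintro _ ⟨n, rfl⟩
    exact (hp (Nat.le_add_right n m)).trans (hb ⟨n, rfl⟩)

-- Junk value `⊥` when `C` has no point above `a`.
noncomputable def nextIn (C : Set α) (a : α) : α :=
  sInf (C ∩ Ioi a)

theorem nextIn_le {C : Set α} {a b : α} (hb : b ∈ C) (hab : a < b) : nextIn C a ≤ b :=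
  csInf_le' ⟨hb, hab⟩

theorem IsClub.nextIn_mem [NoMaxOrder α] {C : Set α} (hC : IsClub C) (a : α) :
    nextIn C a ∈ C ∩ Ioi a := by
  obtain ⟨a', ha'⟩ := exists_gt a
  obtain ⟨b, hb, hab⟩ := hC.isCofinal a'
  exact csInf_mem ⟨b, hb, ha'.trans_le hab⟩

theorem IsClub.nextIn_le_nextIn [NoMaxOrder α] {C D : Set α} (hD : IsClub D) (hDC : D ⊆ C)
    (a : α) : nextIn C a ≤ nextIn D a :=
  nextIn_le (hDC (hD.nextIn_mem a).1) (hD.nextIn_mem a).2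

theorem IsClub.nextIn_le_of_forall_nextIn_le [NoMaxOrder α] {E : Set α} (hE : IsClub E)
    {h : α → α} (hh : Monotone h) (hgap : ∀ d ∈ E, nextIn E d ≤ h d) {e a : α} (he : e ∈ E)
    (hea : e ≤ a) :
    nextIn E a ≤ h a := by
  have hne : (E ∩ Iic a).Nonempty := ⟨e, he, hea⟩
  set d := sSup (E ∩ Iic a)
  have hdE : d ∈ E := hE.csSup_mem inter_subset_left hne ⟨a, fun _ hx => hx.2⟩
  have hda : d ≤ a := csSup_le hne fun _ hx => hx.2
  have hnext : a < nextIn E d := by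
    by_contra! hle
    have hmem : nextIn E d ∈ E ∩ Iic a := ⟨(hE.nextIn_mem d).1, hle⟩
    exact (le_csSup ⟨a, fun _ hx => hx.2⟩ hmem).not_gt (hE.nextIn_mem d).2
  calc nextIn E a ≤ nextIn E d := nextIn_le (hE.nextIn_mem d).1 hnext
    _ ≤ h d := hgap d hdE
    _ ≤ h a := hh hda

variable [IsRegularCardinalOrder α]

theorem exists_isClub_subset_nextIn_le (hα : ℵ₀ < #α) {ι : Type*}
    (hdom : ∀ F : ι → α → α, ∃ g : α → α, ∀ i, ¬ IsStationary {a | g a < F i a})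
    (C : ι → Set α) (hC : ∀ i, IsClub (C i)) :
    ∃ g : α → α, ∃ D : ι → Set α,
      ∀ i, IsClub (D i) ∧ D i ⊆ C i ∧ ∀ a ∈ D i, nextIn (C i) a ≤ g a := by
  have hcof : cof α ≠ ℵ₀ := by rw [cof_eq_cardinalMk]; exact hα.ne'
  obtain ⟨g, hg⟩ := hdom fun i => nextIn (C i)
  choose T hT hdisj using fun i => not_isStationary_iff.1 (hg i)
  refine ⟨g, fun i => C i ∩ T i, fun i => ⟨(hC i).inter hcof (hT i), inter_subset_left,
    fun a ha => not_lt.1 fun hlt => (hdisj i).notMem_of_mem_left hlt ha.2⟩⟩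

variable [NoMaxOrder α]

theorem exists_isClub_subset_nextIn_self_le (hα : ℵ₀ < #α) {ι : Type*}
    (hdom : ∀ F : ι → α → α, ∃ g : α → α, ∀ i, ¬ IsStationary {a | g a < F i a})
    (C : ι → Set α) (hC : ∀ i, IsClub (C i)) :
    ∃ h : α → α, Monotone h ∧ ∃ E : ι → Set α,
      ∀ i, IsClub (E i) ∧ E i ⊆ C i ∧ ∀ d ∈ E i, nextIn (E i) d ≤ h d := by
  choose g D hD using fun C : {C : ι → Set α // ∀ i, IsClub (C i)} =>
    exists_isClub_subset_nextIn_le hα hdom C.1 C.2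
  let seq : ℕ → {C : ι → Set α // ∀ i, IsClub (C i)} :=
    fun n => Nat.rec ⟨C, hC⟩ (fun _ C' => ⟨D C', fun i => (hD C' i).1⟩) n
  have hclub (n : ℕ) (i : ι) : IsClub ((seq n).1 i) := (seq n).2 i
  have hanti (i : ι) : Antitone fun n => (seq n).1 i :=
    antitone_nat_of_succ_le fun n => (hD (seq n) i).2.1
  have hnext (n : ℕ) (i : ι) : ∀ a ∈ (seq (n + 1)).1 i, nextIn ((seq n).1 i) a ≤ g (seq n) a :=
    (hD (seq n) i).2.2
  let gω : α → α := fun a => sSup (range fun n => g (seq n) a)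
  have hgω (n : ℕ) (a : α) : g (seq n) a ≤ gω a :=
    le_csSup (bddAbove_range_of_aleph0_lt hα _) ⟨n, rfl⟩
  obtain ⟨h, hh, hgωh⟩ := exists_monotone_ge hα.le gω
  refine ⟨h, hh, fun i => ⋂ n, (seq n).1 i, fun i => ⟨?_, iInter_subset _ 0, fun d hd => ?_⟩⟩
  · exact IsClub.iInter_of_countable (by rw [cof_eq_cardinalMk]; exact hα.ne') (hclub · i)
  · let p : ℕ → α := fun n => nextIn ((seq n).1 i) d
    have hpmono : Monotone p := fun m n hmn => (hclub n i).nextIn_le_nextIn (hanti i hmn) d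
    have hpbdd : BddAbove (range p) := bddAbove_range_of_aleph0_lt hα p
    have hpmem : sSup (range p) ∈ ⋂ n, (seq n).1 i :=
      csSup_range_mem_iInter (hclub · i) (hanti i) hpmono (fun n => ((hclub n i).nextIn_mem d).1)
        hpbdd
    calc nextIn (⋂ n, (seq n).1 i) d ≤ sSup (range p) :=
          nextIn_le hpmem ((((hclub 0 i).nextIn_mem d).2).trans_le (le_csSup hpbdd ⟨0, rfl⟩))
      _ ≤ gω d := csSup_le (range_nonempty p) (by
          rintro _ ⟨n, rfl⟩
          exact (hnext n i d (mem_iInter.1 hd (n + 1))).trans (hgω n d))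
      _ ≤ h d := hgωh d

theorem exists_forall_bddAbove_of_forall_not_isStationary (hα : ℵ₀ < #α) {ι : Type*}
    (hdom : ∀ F : ι → α → α, ∃ g : α → α, ∀ i, ¬ IsStationary {a | g a < F i a})
    (F : ι → α → α) : ∃ g : α → α, ∀ i, BddAbove {a | g a < F i a} := by
  choose F' hF'mono hFF' using fun i => exists_monotone_ge hα.le (F i)
  obtain ⟨g₀, hg₀⟩ := hdom F'
  choose C hC hdisj using fun i => not_isStationary_iff.1 (hg₀ i)
  obtain ⟨h, hh, E, hE⟩ := exists_isClub_subset_nextIn_self_le hα hdom C hC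
  obtain ⟨g, hg, hg₀g⟩ := exists_monotone_ge hα.le g₀
  refine ⟨g ∘ h, fun i => ?_⟩
  obtain ⟨hEclub, hEC, hgap⟩ := hE i
  obtain ⟨e, he⟩ := hEclub.nonempty
  refine ⟨e, fun a ha => not_lt.1 fun hea => ha.not_ge ?_⟩
  have hc := hEclub.nextIn_mem a
  calc F i a ≤ F' i a := hFF' i a
    _ ≤ F' i (nextIn (E i) a) := hF'mono i hc.2.le
    _ ≤ g₀ (nextIn (E i) a) := not_lt.1 fun hlt => (hdisj i).notMem_of_mem_left hlt (hEC hc.1)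
    _ ≤ g (nextIn (E i) a) := hg₀g _
    _ ≤ g (h a) := hg (hEclub.nextIn_le_of_forall_nextIn_le hh hgap he hea.le)

theorem clubUnboundingNumber_le_bddUnboundingNumber (hα : ℵ₀ < #α) :
    clubUnboundingNumber α ≤ bddUnboundingNumber α := by
  by_contra! hlt
  obtain ⟨B₀, hB₀⟩ := exists_clubUnbounding_family (α := α)
  obtain ⟨B, hB, hBcard⟩ : bddUnboundingNumber α ∈ _ :=
    csInf_mem ⟨_, B₀, fun g => (hB₀ g).imp fun f hf => ⟨hf.1, hf.2.not_bddAbove⟩, rfl⟩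
  have hdom (F : B → α → α) : ∃ g : α → α, ∀ i, ¬ IsStationary {a | g a < F i a} := by
    obtain ⟨g, hg⟩ := exists_forall_not_isStatIn_of_mk_lt (mk_range_le.trans_lt (hBcard ▸ hlt))
    exact ⟨g, fun i => isStatIn_iff_isStationary.not.1 (hg _ ⟨i, rfl⟩)⟩
  obtain ⟨g, hg⟩ := exists_forall_bddAbove_of_forall_not_isStationary hα hdom Subtype.val
  obtain ⟨f, hf, hunb⟩ := hB g
  exact hunb (hg ⟨f, hf⟩)

end RegularCardinalOrder

/-- For every regular uncountable cardinal `κ` we have `b_κ = b^cl_κ`.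
Here `κ` is represented as a well-ordered type `α` of regular uncountable cardinality
all of whose proper initial segments are of size `< #α`. -/
theorem bddUnbounding_eq_clubUnbounding {α : Type*} [LinearOrder α] [WellFoundedLT α]
    (hreg : (#α).IsRegular) (hunc : ℵ₀ < #α)
    (hinit : ∀ a : α, #(Set.Iio a) < #α) :
    bddUnboundingNumber α = clubUnboundingNumber α := by
  have : IsRegularCardinalOrder α := hreg.isRegularCardinalOrder hinit
  have : Nonempty α := mk_ne_zero_iff.1 (aleph0_pos.trans hunc).ne'
  have : NoMaxOrder α := noMaxOrder_of_aleph0_le hunc.le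
  exact le_antisymm bddUnboundingNumber_le_clubUnboundingNumber
    (clubUnboundingNumber_le_bddUnboundingNumber hunc)
end

section
/- For every regular uncountable cardinal κ there exists a maximal stationary almost disjoint family on κ of cardinality exactly κ; consequently the stationary almost disjointness number a^cl_κ (the least cardinality of a maximal stationary almost disjoint family of size at least κ) equals κ. -/
open Set Cardinal

/-- `A` is a stationary almost disjoint family: a family of stationary sets whose
pairwise intersections are non-stationary. -/
def IsSADFamily {α : Type*} [LinearOrder α] (A : Set (Set α)) : Prop :=
  (∀ x ∈ A, IsStatIn x) ∧ ∀ x ∈ A, ∀ y ∈ A, x ≠ y → ¬ IsStatIn (x ∩ y)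

/-- `A` is a maximal stationary almost disjoint family: no stationary set is
stationary almost disjoint from every member of `A`. -/
def IsMaxSADFamily {α : Type*} [LinearOrder α] (A : Set (Set α)) : Prop :=
  IsSADFamily A ∧ ∀ z : Set α, IsStatIn z → ∃ x ∈ A, IsStatIn (z ∩ x)

/-- The stationary almost disjointness number `a^cl_κ`: the least cardinality of a maximal
stationary almost disjoint family of size at least `κ`. -/
noncomputable def statADNumber (α : Type*) [LinearOrder α] : Cardinal :=
  sInf { c : Cardinal | ∃ A : Set (Set α), IsMaxSADFamily A ∧ #α ≤ #A ∧ c = #A }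

open Order
open scoped Ordinal

/-! The points `S` of cofinality `ω` form a stationary set. Choosing a cofinal `ω`-sequence `x b`
for each `b ∈ S`, some coordinate `F b = x b n` is regressive on `S` and still `≥ β` on a stationary
set for every `β`. Fodor's lemma then makes the fibres `S ∩ F⁻¹{γ}` stationary for cofinally many,
hence `κ` many, `γ`. These fibres are pairwise disjoint; adding the rest of `κ` to one of them gives a
partition of a tail of `κ` into stationary pieces indexed regressively, and Fodor's lemma again shows
that every stationary set meets one of the pieces in a stationary set. -/

section LinearOrder

variable {α : Type*} [LinearOrder α]

theorem noMaxOrder_of_aleph0_lt_cof (hα : ℵ₀ < cof α) : NoMaxOrder α := by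
  rw [← noTopOrder_iff_noMaxOrder, ← cof_ne_one_iff]
  exact (one_lt_aleph0.trans hα).ne'

theorem not_isCofinal_of_mk_lt_cof {s : Set α} (hs : #s < cof α) : ¬ IsCofinal s :=
  fun h => (cof_le h).not_gt hs

theorem not_isCofinal_of_countable (hα : ℵ₀ < cof α) {s : Set α} (hs : s.Countable) :
    ¬ IsCofinal s :=
  not_isCofinal_of_mk_lt_cof ((mk_le_aleph0_iff.2 hs.to_subtype).trans_lt hα)

theorem isMaxSADFamily_iff [NoMaxOrder α] {A : Set (Set α)} :
    IsMaxSADFamily A ↔ ((∀ x ∈ A, IsStationary x) ∧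
      ∀ x ∈ A, ∀ y ∈ A, x ≠ y → ¬ IsStationary (x ∩ y)) ∧
      ∀ z, IsStationary z → ∃ x ∈ A, IsStationary (z ∩ x) := by
  simp only [IsMaxSADFamily, IsSADFamily, isStatIn_iff_isStationary]

theorem statADNumber_eq_of_isMaxSADFamily {A : Set (Set α)} (hA : IsMaxSADFamily A)
    (hAα : #A = #α) : statADNumber α = #α := by
  have hmem : #α ∈ {c | ∃ A : Set (Set α), IsMaxSADFamily A ∧ #α ≤ #A ∧ c = #A} :=
    ⟨A, hA, hAα.ge, hAα.symm⟩
  refine le_antisymm (csInf_le' hmem) (le_csInf ⟨_, hmem⟩ ?_)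
  rintro _ ⟨_, -, h, rfl⟩
  exact h

theorem IsClub.exists_gt [NoMaxOrder α] {c : Set α} (hc : IsClub c) (a : α) : ∃ b ∈ c, a < b :=
  isClubIn_iff_isClub.2 hc |>.2 a

theorem isClub_Ioi [NoMaxOrder α] (a : α) : IsClub (Ioi a) := by
  refine isClubIn_iff_isClub.1 ⟨fun s hs ⟨x, hx⟩ b hb => (hs hx).trans_le (hb.1 hx), fun b => ?_⟩
  obtain ⟨c, hc⟩ := exists_gt (max a b)
  exact ⟨c, (le_max_left a b).trans_lt hc, (le_max_right a b).trans_lt hc⟩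

theorem IsClub.mem_of_forall_lt_exists_mem {c : Set α} (hc : IsClub c) {ℓ a : α} (ha : a < ℓ)
    (h : ∀ b < ℓ, ∃ e ∈ c, b < e ∧ e < ℓ) : ℓ ∈ c := by
  obtain ⟨e, he, -, heℓ⟩ := h a ha
  refine hc.isLUB_mem (t := c ∩ Iio ℓ) inter_subset_left ⟨e, he, heℓ⟩
    ⟨fun x hx => hx.2.le, fun u hu => le_of_not_gt fun huℓ => ?_⟩
  obtain ⟨e', he', hue', he'ℓ⟩ := h u huℓ
  exact (hu ⟨he', he'ℓ⟩).not_gt hue'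

end LinearOrder

section WellFoundedLT

variable {α : Type*} [LinearOrder α] [WellFoundedLT α]

theorem Cardinal.ord_mk_eq_typeLT (h : ∀ a : α, #(Iio a) < #α) : ord #α = typeLT α := by
  refine le_antisymm (ord_le.2 (Ordinal.card_type _).ge) (le_of_forall_lt fun o ho => ?_)
  obtain ⟨a, rfl⟩ := Ordinal.typein_surj (α := α) (· < ·) ho
  rw [lt_ord, Ordinal.card_typein]
  exact h a

theorem isRegularCardinalOrder_of_isRegular (hreg : (#α).IsRegular)
    (h : ∀ a : α, #(Iio a) < #α) : IsRegularCardinalOrder α where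
  type_lt_le_ord_cof := by
    rw [← Ordinal.cof_type, ← ord_mk_eq_typeLT h, hreg.cof_ord]

theorem exists_isLUB_of_bddAbove {s : Set α} (hs : BddAbove s) : ∃ a, IsLUB s a := by
  obtain ⟨a, ha, hmin⟩ := wellFounded_lt.has_min (upperBounds s) hs
  exact ⟨a, ha, fun b hb => not_lt.1 (hmin b hb)⟩

theorem IsStationary.inter_isClub (hα : cof α ≠ ℵ₀) {s c : Set α} (hs : IsStationary s)
    (hc : IsClub c) : IsStationary (s ∩ c) := fun t ht => by
  simpa only [inter_assoc] using hs (hc.inter hα ht)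

variable (α) in
def cofOmegaPoints : Set α := {ℓ | ∃ x : ℕ → α, (∀ n, x n < ℓ) ∧ IsLUB (range x) ℓ}

theorem IsStationary.exists_forall_isStationary_le_apply (hα : ℵ₀ < cof α) {S : Set α}
    (hS : IsStationary S) {x : α → ℕ → α} (hx : ∀ b ∈ S, IsLUB (range (x b)) b) :
    ∃ n, ∀ β, IsStationary {b ∈ S | β ≤ x b n} := by
  -- Otherwise take `b ∈ S` in clubs witnessing the failure of every `n` and above a strict upper
  -- bound `u` of the failing `β n`: then `x b n < β n < u` for all `n`, contradicting `u < b = sup`.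
  have := noMaxOrder_of_aleph0_lt_cof hα
  by_contra! h
  choose β hβ using h
  choose c hc hSc using fun n => not_isStationary_iff.1 (hβ n)
  obtain ⟨u, hu⟩ := not_isCofinal_iff.1 (not_isCofinal_of_countable hα (countable_range β))
  obtain ⟨b, hbS, hbc, hub⟩ :=
    hS ((IsClub.iInter_of_countable hα.ne' hc).inter hα.ne' (isClub_Ioi u))
  refine (hub : u < b).not_ge ((hx b hbS).2 ?_)
  rintro _ ⟨n, rfl⟩
  have hxβ : x b n < β n :=
    lt_of_not_ge fun hle => disjoint_left.1 (hSc n) ⟨hbS, hle⟩ (mem_iInter.1 hbc n)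
  exact (hxβ.trans (hu _ ⟨n, rfl⟩)).le

section RegularCardinalOrder

variable [IsRegularCardinalOrder α]

theorem exists_forall_le_apply_lt (hα : ℵ₀ ≤ cof α) (g : α → α) (b : α) :
    ∃ c, ∀ e ≤ b, g e < c := by
  have hsmall : #(g '' Iic b) < cof α := by
    rw [cof_eq_cardinalMk] at hα ⊢
    exact mk_image_le.trans_lt (mk_Iic_lt b ord_cardinalMk hα)
  obtain ⟨c, hc⟩ := not_isCofinal_iff.1 (not_isCofinal_of_mk_lt_cof hsmall)
  exact ⟨c, fun e he => hc _ (mem_image_of_mem g he)⟩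

theorem exists_mem_cofOmegaPoints_forall_lt_apply_lt (hα : ℵ₀ < cof α) (f : α → α) (a : α) :
    ∃ ℓ ∈ cofOmegaPoints α, a < ℓ ∧ ∀ b < ℓ, f b < ℓ := by
  choose h hh using exists_forall_le_apply_lt hα.le fun e => max e (f e)
  set x : ℕ → α := fun n => h^[n + 1] a
  have hxs : ∀ n, x (n + 1) = h (x n) := fun n => Function.iterate_succ_apply' h (n + 1) a
  have hlt : ∀ n, x n < x (n + 1) := fun n =>
    hxs n ▸ (le_max_left _ _).trans_lt (hh (x n) (x n) le_rfl)
  obtain ⟨ℓ, hℓ⟩ := exists_isLUB_of_bddAbove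
    (.of_not_isCofinal (not_isCofinal_of_countable hα (countable_range x)))
  have hxℓ : ∀ n, x n < ℓ := fun n => (hlt n).trans_le (hℓ.1 ⟨n + 1, rfl⟩)
  refine ⟨ℓ, by exact ⟨x, hxℓ, hℓ⟩, ((le_max_left _ _).trans_lt (hh a a le_rfl)).trans (hxℓ 0),
    fun b hb => ?_⟩
  obtain ⟨_, ⟨n, rfl⟩, hbn⟩ := (lt_isLUB_iff hℓ).1 hb
  exact ((le_max_right _ _).trans_lt (hh (x n) b hbn.le)).trans (hxs n ▸ hxℓ (n + 1))

def diagInter (D : α → Set α) : Set α := {b | ∀ γ < b, b ∈ D γ}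

theorem IsClub.diagInter (hα : ℵ₀ < cof α) {D : α → Set α} (hD : ∀ γ, IsClub (D γ)) :
    IsClub (diagInter D) := by
  have := noMaxOrder_of_aleph0_lt_cof hα
  refine ⟨fun t ht _ _ a ha γ hγ => ?_, fun a => ?_⟩
  · obtain ⟨b, hb, hγb⟩ := (lt_isLUB_iff ha).1 hγ
    exact (hD γ).isLUB_mem (t := t ∩ Ici b) (fun e he => ht he.1 γ (hγb.trans_le he.2))
      ⟨b, hb, le_rfl⟩ (ha.inter_Ici_of_mem hb)
  · choose nxt hnxt hlt using fun γ => (hD γ).exists_gt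
    choose g hg using fun b => exists_forall_le_apply_lt hα.le (nxt · b) b
    obtain ⟨ℓ, -, haℓ, hℓ⟩ := exists_mem_cofOmegaPoints_forall_lt_apply_lt hα g a
    refine ⟨ℓ, fun γ hγ => (hD γ).mem_of_forall_lt_exists_mem hγ fun b hb => ?_, haℓ.le⟩
    exact ⟨nxt γ (max b γ), hnxt _ _, (le_max_left b γ).trans_lt (hlt _ _),
      (hg _ γ (le_max_right b γ)).trans (hℓ _ (max_lt hb hγ))⟩

theorem IsStationary.exists_isStationary_inter_preimage_singleton (hα : ℵ₀ < cof α)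
    {T : Set α} (hT : IsStationary T) {f : α → α} (hf : ∀ b ∈ T, f b < b) :
    ∃ γ, IsStationary (T ∩ f ⁻¹' {γ}) := by
  by_contra! h
  choose D hD hTD using fun γ => not_isStationary_iff.1 (h γ)
  obtain ⟨b, hbT, hbD⟩ := hT (IsClub.diagInter hα hD)
  exact disjoint_left.1 (hTD (f b)) ⟨hbT, rfl⟩ (hbD _ (hf b hbT))

theorem isStationary_cofOmegaPoints (hα : ℵ₀ < cof α) : IsStationary (cofOmegaPoints α) := by
  have := noMaxOrder_of_aleph0_lt_cof hα
  obtain ⟨a⟩ := cof_ne_zero_iff.1 (aleph0_pos.trans hα).ne'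
  intro c hc
  choose nxt hnxt hlt using hc.exists_gt
  obtain ⟨ℓ, hℓS, haℓ, hℓ⟩ := exists_mem_cofOmegaPoints_forall_lt_apply_lt hα nxt a
  exact ⟨ℓ, hℓS, hc.mem_of_forall_lt_exists_mem haℓ fun b hb => ⟨nxt b, hnxt b, hlt b, hℓ b hb⟩⟩

theorem exists_regressive_isCofinal_setOf_isStationary (hα : ℵ₀ < cof α) :
    ∃ (S : Set α) (F : α → α), (∀ b ∈ S, F b < b) ∧
      IsCofinal {γ | IsStationary (S ∩ F ⁻¹' {γ})} := by
  choose! x hxlt hx using fun b (hb : b ∈ cofOmegaPoints α) => hb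
  obtain ⟨n, hn⟩ := (isStationary_cofOmegaPoints hα).exists_forall_isStationary_le_apply hα hx
  refine ⟨cofOmegaPoints α, (x · n), fun b hb => hxlt b hb n, fun β => ?_⟩
  obtain ⟨γ, hγ⟩ :=
    (hn β).exists_isStationary_inter_preimage_singleton hα fun b hb => hxlt b hb.1 n
  obtain ⟨b, ⟨-, hβb⟩, rfl⟩ := hγ.nonempty
  exact ⟨x b n, hγ.mono fun e he => ⟨he.1.1, he.2⟩, hβb⟩

theorem isMaxSADFamily_image_preimage_singleton (hα : ℵ₀ < cof α) {p : α → α} {G C : Set α}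
    (hC : IsClub C) (hpC : ∀ b ∈ C, p b < b ∧ p b ∈ G)
    (hG : ∀ γ ∈ G, IsStationary (p ⁻¹' {γ})) :
    IsMaxSADFamily ((fun γ => p ⁻¹' {γ}) '' G) := by
  have := noMaxOrder_of_aleph0_lt_cof hα
  refine isMaxSADFamily_iff.2 ⟨⟨?_, ?_⟩, fun z hz => ?_⟩
  · rintro _ ⟨γ, hγ, rfl⟩
    exact hG γ hγ
  · rintro _ ⟨γ, -, rfl⟩ _ ⟨δ, -, rfl⟩ hne hst
    obtain ⟨b, hbγ, hbδ⟩ := hst.nonempty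
    exact hne (congrArg (fun γ => p ⁻¹' {γ}) ((hbγ : p b = γ).symm.trans hbδ))
  · obtain ⟨γ, hγ⟩ := (hz.inter_isClub hα.ne' hC).exists_isStationary_inter_preimage_singleton
      hα fun b hb => (hpC b hb.2).1
    obtain ⟨b, ⟨-, hbC⟩, rfl⟩ := hγ.nonempty
    exact ⟨_, ⟨p b, (hpC b hbC).2, rfl⟩, hγ.mono fun e he => ⟨he.1.1, he.2⟩⟩

theorem exists_isMaxSADFamily_mk_eq (hα : ℵ₀ < cof α) :
    ∃ A : Set (Set α), IsMaxSADFamily A ∧ #A = #α := by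
  classical
  have := noMaxOrder_of_aleph0_lt_cof hα
  have : Nonempty α := cof_ne_zero_iff.1 (aleph0_pos.trans hα).ne'
  obtain ⟨S, F, hF, hG⟩ := exists_regressive_isCofinal_setOf_isStationary hα
  set G := {γ | IsStationary (S ∩ F ⁻¹' {γ})}
  obtain ⟨γ₀, hγ₀⟩ := hG.nonempty
  let p : α → α := fun b => if b ∈ S ∧ F b ∈ G then F b else γ₀
  have hfiber : ∀ γ ∈ G, S ∩ F ⁻¹' {γ} ⊆ p ⁻¹' {γ} := by
    rintro γ hγ b ⟨hbS, rfl⟩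
    simp [p, hbS, hγ]
  have hpC : ∀ b ∈ Ioi γ₀, p b < b ∧ p b ∈ G := by
    intro b hb
    by_cases h : b ∈ S ∧ F b ∈ G
    · simp only [p, if_pos h]
      exact ⟨hF b h.1, h.2⟩
    · simp only [p, if_neg h]
      exact ⟨hb, hγ₀⟩
  have hinj : InjOn (fun γ => p ⁻¹' {γ}) G := by
    intro γ hγ δ _ hγδ
    obtain ⟨b, hb⟩ := (hγ : IsStationary _).nonempty
    have hbδ : b ∈ p ⁻¹' {δ} := (show p ⁻¹' {γ} = p ⁻¹' {δ} from hγδ) ▸ hfiber γ hγ hb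
    exact (hfiber γ hγ hb).symm.trans hbδ
  refine ⟨_, isMaxSADFamily_image_preimage_singleton hα (isClub_Ioi γ₀) hpC
    fun γ hγ => (hγ : IsStationary _).mono (hfiber γ hγ), ?_⟩
  rw [mk_image_eq_of_injOn _ _ hinj]
  exact le_antisymm (mk_set_le G) (cof_eq_cardinalMk (α := α) ▸ cof_le hG)

end RegularCardinalOrder

end WellFoundedLT

/-- For every regular uncountable cardinal `κ` there is a maximal stationary almost disjoint
family of cardinality exactly `κ`; consequently `a^cl_κ = κ`.
Here `κ` is represented as a well-ordered type `α` of regular uncountable cardinality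
all of whose proper initial segments are of size `< #α`. -/
theorem statADNumber_eq {α : Type*} [LinearOrder α] [WellFoundedLT α]
    (hreg : (#α).IsRegular) (hunc : ℵ₀ < #α)
    (hinit : ∀ a : α, #(Set.Iio a) < #α) :
    (∃ A : Set (Set α), IsMaxSADFamily A ∧ #A = #α) ∧ statADNumber α = #α := by
  have := isRegularCardinalOrder_of_isRegular hreg hinit
  obtain ⟨A, hA, hAα⟩ := exists_isMaxSADFamily_mk_eq (α := α) (by rwa [cof_eq_cardinalMk])
  exact ⟨⟨A, hA, hAα⟩, statADNumber_eq_of_isMaxSADFamily hA hAα⟩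
end

section
/- Let κ be a measurable cardinal. Then the measure ultrafilter number equals the normal measure ultrafilter number: the least cardinality of a family of stationary subsets of κ forming a base for some measure on κ equals the least cardinality of a family of stationary subsets of κ forming a base for some normal measure on κ. -/
open Set Cardinal

/-- `U` is a measure: a uniform, `<κ`-complete ultrafilter. -/
def IsMeasureOn {α : Type*} (U : Ultrafilter α) : Prop :=
  (∀ x ∈ U, #x = #α) ∧
    ∀ F : Set (Set α), #F < #α → (∀ x ∈ F, x ∈ U) → ⋂₀ F ∈ U

/-- `U` is a normal measure: a measure closed under diagonal intersections. -/
def IsNormalMeasureOn {α : Type*} [LinearOrder α] (U : Ultrafilter α) : Prop :=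
  IsMeasureOn U ∧ ∀ f : α → Set α, (∀ i, f i ∈ U) → {k : α | ∀ i < k, k ∈ f i} ∈ U

/-- `B` is a base for the ultrafilter `U`. -/
def IsBaseFor {α : Type*} (B : Set (Set α)) (U : Ultrafilter α) : Prop :=
  (∀ b ∈ B, b ∈ U) ∧ ∀ u ∈ U, ∃ b ∈ B, b ⊆ u

/-- The measure ultrafilter number `u^me_κ`: the least cardinality of a family of stationary
sets forming a base for some measure on `κ`. -/
noncomputable def uMe (α : Type*) [LinearOrder α] : Cardinal :=
  sInf { c : Cardinal | ∃ B : Set (Set α), (∀ b ∈ B, IsStatIn b) ∧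
    (∃ U : Ultrafilter α, IsMeasureOn U ∧ IsBaseFor B U) ∧ c = #B }

/-- The normal measure ultrafilter number `u^nm_κ`: the least cardinality of a family of
stationary sets forming a base for some normal measure on `κ`. -/
noncomputable def uNm (α : Type*) [LinearOrder α] : Cardinal :=
  sInf { c : Cardinal | ∃ B : Set (Set α), (∀ b ∈ B, IsStatIn b) ∧
    (∃ U : Ultrafilter α, IsNormalMeasureOn U ∧ IsBaseFor B U) ∧ c = #B }

/-!
Every measure `U` on `κ` projects to a normal measure `U.map f`, where `f` is a least function
(in the ultrapower ordering, which is well founded by countable completeness) that is unbounded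
modulo `U`; minimality of `f` is exactly what makes `U.map f` closed under diagonal
intersections. The image under `f` of a base of `U` is a base of `U.map f` of no larger size,
and every member of a normal measure is stationary because normal measures contain all clubs.
Hence `u^nm_κ ≤ u^me_κ`; the other inequality holds since normal measures are measures.
-/

open Filter

section Measure

variable {α : Type*} {U : Ultrafilter α}

theorem IsMeasureOn.iInter_mem (hU : IsMeasureOn U) {ι : Type*} (g : ι → Set α)
    (hg : #(range g) < #α) (hgU : ∀ i, g i ∈ U) : ⋂ i, g i ∈ U := by
  rw [← sInter_range]
  exact hU.2 _ hg (forall_mem_range.2 hgU)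

theorem IsMeasureOn.compl_mem_of_mk_lt (hU : IsMeasureOn U) {x : Set α} (hx : #x < #α) :
    xᶜ ∈ U :=
  U.compl_mem_iff_notMem.2 fun hxU => (hU.1 x hxU).not_lt hx

theorem isBaseFor_setOf_mem (U : Ultrafilter α) : IsBaseFor {x | x ∈ U} U :=
  ⟨fun _ hx => hx, fun u hu => ⟨u, hu, subset_rfl⟩⟩

theorem IsBaseFor.image {β : Type*} {B : Set (Set α)} (hB : IsBaseFor B U) (f : α → β) :
    IsBaseFor ((f '' ·) '' B) (U.map f) := by
  refine ⟨forall_mem_image.2 fun b hb =>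
    Ultrafilter.mem_map.2 (mem_of_superset (hB.1 b hb) (subset_preimage_image f b)),
    fun u hu => ?_⟩
  obtain ⟨b, hb, hbu⟩ := hB.2 _ hu
  exact ⟨f '' b, mem_image_of_mem _ hb, image_subset_iff.2 hbu⟩

theorem IsMeasureOn.wellFounded_eventually_lt {β : Type*} [Preorder β] [WellFoundedLT β]
    (hU : IsMeasureOn U) (hunc : ℵ₀ < #α) :
    WellFounded fun f g : α → β => ∀ᶠ i in (U : Filter α), f i < g i := by
  refine wellFounded_iff_isEmpty_descending_chain.2 ⟨fun ⟨F, hF⟩ => ?_⟩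
  have hdesc := hU.iInter_mem _ ((countable_range _).le_aleph0.trans_lt hunc) hF
  obtain ⟨i, hi⟩ := U.nonempty_of_mem hdesc
  obtain ⟨n, hn⟩ := WellFounded.not_rel_apply_succ (r := (· < ·)) fun n => F n i
  exact hn (mem_iInter.1 hi n)

variable [LinearOrder α]

theorem mk_Iic_lt (hα : ℵ₀ ≤ #α) (hinit : ∀ a : α, #(Iio a) < #α) (a : α) :
    #(Iic a) < #α := by
  rw [← Iio_insert]
  exact mk_insert_le.trans_lt (add_lt_of_lt hα (hinit a) (one_lt_aleph0.trans_le hα))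

theorem IsMeasureOn.Ioi_mem (hU : IsMeasureOn U) (hα : ℵ₀ ≤ #α)
    (hinit : ∀ a : α, #(Iio a) < #α) (a : α) : Ioi a ∈ U := by
  rw [← compl_Iic]
  exact hU.compl_mem_of_mk_lt (mk_Iic_lt hα hinit a)

theorem IsMeasureOn.map (hU : IsMeasureOn U) {f : α → α} (hf : ∀ a, f ⁻¹' Ioi a ∈ U) :
    IsMeasureOn (U.map f) := by
  have hcomplete : ∀ F : Set (Set α), #F < #α → (∀ x ∈ F, x ∈ U.map f) → ⋂₀ F ∈ U.map f := by
    intro F hF hFU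
    rw [Ultrafilter.mem_map, preimage_sInter, ← sInter_image]
    exact hU.2 _ (mk_image_le.trans_lt hF) (forall_mem_image.2 hFU)
  refine ⟨fun x hx => le_antisymm (mk_set_le x) (not_lt.1 fun hx_small => ?_), hcomplete⟩
  -- a small member of `U.map f` would contain a point above all of its own elements
  have hIoi : ⋂₀ (Ioi '' x) ∈ U.map f :=
    hcomplete _ (mk_image_le.trans_lt hx_small) (forall_mem_image.2 fun a _ => hf a)
  obtain ⟨j, hjx, hj⟩ := (U.map f).nonempty_of_mem (inter_mem hx hIoi)
  exact lt_irrefl j (mem_sInter.1 hj _ (mem_image_of_mem Ioi hjx))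

theorem IsMeasureOn.isNormalMeasureOn_map_of_minimal (hU : IsMeasureOn U) (hα : ℵ₀ ≤ #α)
    (hinit : ∀ a : α, #(Iio a) < #α) {f : α → α} (hf : ∀ a, f ⁻¹' Ioi a ∈ U)
    (hmin : ∀ g : α → α, (∀ᶠ j in (U : Filter α), g j < f j) → ¬∀ a, g ⁻¹' Ioi a ∈ U) :
    IsNormalMeasureOn (U.map f) := by
  classical
  refine ⟨hU.map hf, fun x hx => by_contra fun hdiag => ?_⟩
  set A := {j | ∃ i < f j, f j ∉ x i}
  have hA : A ∈ U :=
    mem_of_superset (U.compl_mem_iff_notMem.2 hdiag) fun j hj => by simpa [A] using hj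
  let g : α → α := fun j => if h : j ∈ A then h.choose else f j
  have hg : ∀ j ∈ A, g j < f j ∧ f j ∉ x (g j) := fun j hj => by
    simp only [g, dif_pos hj]
    exact hj.choose_spec
  -- `g` lies below `f` modulo `U`, so by minimality of `f` it is bounded by some `a` modulo `U`
  obtain ⟨a, ha⟩ : ∃ a, g ⁻¹' Ioi a ∉ U := not_forall.1 <|
    hmin g (mem_of_superset hA fun j hj => (hg j hj).1)
  have hxa : ⋂ i : Iic a, f ⁻¹' x i ∈ U :=
    hU.iInter_mem _ (mk_range_le.trans_lt (mk_Iic_lt hα hinit a)) fun i => hx i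
  obtain ⟨j, ⟨hjA, hja⟩, hjx⟩ :=
    U.nonempty_of_mem (inter_mem (inter_mem hA (U.compl_mem_iff_notMem.2 ha)) hxa)
  exact (hg j hjA).2 (mem_iInter.1 hjx ⟨g j, not_lt.1 hja⟩)

theorem IsMeasureOn.exists_isNormalMeasureOn_map [WellFoundedLT α] (hU : IsMeasureOn U)
    (hunc : ℵ₀ < #α) (hinit : ∀ a : α, #(Iio a) < #α) :
    ∃ f : α → α, IsNormalMeasureOn (U.map f) := by
  obtain ⟨f, hf, hmin⟩ := (hU.wellFounded_eventually_lt hunc).has_min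
    {f : α → α | ∀ a, f ⁻¹' Ioi a ∈ U} ⟨id, hU.Ioi_mem hunc.le hinit⟩
  exact ⟨f, hU.isNormalMeasureOn_map_of_minimal hunc.le hinit hf fun g hg hgS => hmin g hgS hg⟩

end Measure

section Normal

variable {α : Type*} [LinearOrder α] {D : Ultrafilter α}

theorem IsNormalMeasureOn.club_mem (hD : IsNormalMeasureOn D) (hα : ℵ₀ ≤ #α)
    (hinit : ∀ a : α, #(Iio a) < #α) {c : Set α} (hc : IsClubIn c) : c ∈ D := by
  obtain ⟨hclosed, hunbdd⟩ := hc
  choose h hhc hlt using hunbdd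
  obtain ⟨a, -⟩ := D.nonempty_of_mem univ_mem
  have hdiag := hD.2 _ fun i => hD.1.Ioi_mem hα hinit (h i)
  filter_upwards [hdiag, hD.1.Ioi_mem hα hinit a] with k hk hak
  -- `k` is a limit of `c`, witnessed by the points `h i ∈ c ∩ (i, k)` for `i < k`
  refine hclosed {b | b ∈ c ∧ b < k} (fun b hb => hb.1) ⟨h a, hhc a, hk a hak⟩ k
    ⟨fun b hb => hb.2.le, fun m hm => not_lt.1 fun hmk => ?_⟩
  exact (hlt m).not_ge (hm ⟨hhc m, hk m hmk⟩)

theorem IsNormalMeasureOn.isStatIn_of_mem (hD : IsNormalMeasureOn D) (hα : ℵ₀ ≤ #α)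
    (hinit : ∀ a : α, #(Iio a) < #α) {x : Set α} (hx : x ∈ D) : IsStatIn x :=
  fun _ hc => D.nonempty_of_mem (inter_mem hx (hD.club_mem hα hinit hc))

end Normal

section UltrafilterNumbers

variable {α : Type*} [LinearOrder α]

theorem uNm_le_mk_of_isBaseFor [WellFoundedLT α] (hunc : ℵ₀ < #α)
    (hinit : ∀ a : α, #(Iio a) < #α) {U : Ultrafilter α} (hU : IsMeasureOn U)
    {B : Set (Set α)} (hB : IsBaseFor B U) : uNm α ≤ #B := by
  obtain ⟨f, hD⟩ := hU.exists_isNormalMeasureOn_map hunc hinit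
  have hfB := hB.image f
  calc uNm α ≤ #((f '' ·) '' B) :=
        csInf_le' ⟨_, fun _ hb => hD.isStatIn_of_mem hunc.le hinit (hfB.1 _ hb), ⟨_, hD, hfB⟩, rfl⟩
    _ ≤ #B := mk_image_le

theorem uMe_le_uNm (hα : ℵ₀ ≤ #α) (hinit : ∀ a : α, #(Iio a) < #α) {D : Ultrafilter α}
    (hD : IsNormalMeasureOn D) : uMe α ≤ uNm α :=
  csInf_le_csInf'
    ⟨_, _, fun _ hx => hD.isStatIn_of_mem hα hinit hx, ⟨D, hD, isBaseFor_setOf_mem D⟩, rfl⟩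
    fun _ ⟨B, hstat, ⟨_, hV, hB⟩, hc⟩ => ⟨B, hstat, ⟨_, hV.1, hB⟩, hc⟩

theorem uNm_le_uMe [WellFoundedLT α] (hunc : ℵ₀ < #α) (hinit : ∀ a : α, #(Iio a) < #α)
    {D : Ultrafilter α} (hD : IsNormalMeasureOn D) : uNm α ≤ uMe α :=
  le_csInf
    ⟨_, _, fun _ hx => hD.isStatIn_of_mem hunc.le hinit hx, ⟨D, hD.1, isBaseFor_setOf_mem D⟩, rfl⟩
    fun _ ⟨_, _, ⟨_, hV, hB⟩, hc⟩ => hc ▸ uNm_le_mk_of_isBaseFor hunc hinit hV hB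

end UltrafilterNumbers

theorem uMe_eq_uNm_general {α : Type*} [LinearOrder α] [WellFoundedLT α]
    (hunc : ℵ₀ < #α)
    (hinit : ∀ a : α, #(Set.Iio a) < #α)
    (hmeas : ∃ U : Ultrafilter α, IsMeasureOn U) :
    uMe α = uNm α := by
  obtain ⟨U, hU⟩ := hmeas
  obtain ⟨f, hD⟩ := hU.exists_isNormalMeasureOn_map hunc hinit
  exact le_antisymm (uMe_le_uNm hunc.le hinit hD) (uNm_le_uMe hunc hinit hD)

/-- For a measurable cardinal `κ` the measure ultrafilter number equals the normal measure
ultrafilter number: `u^me_κ = u^nm_κ`. Here `κ` is represented as a well-ordered type `α` of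
regular uncountable cardinality, all of whose proper initial segments are of size `< #α`,
carrying a measure. -/
theorem uMe_eq_uNm {α : Type*} [LinearOrder α] [WellFoundedLT α]
    (hreg : (#α).IsRegular) (hunc : ℵ₀ < #α)
    (hinit : ∀ a : α, #(Set.Iio a) < #α)
    (hmeas : ∃ U : Ultrafilter α, IsMeasureOn U) :
    uMe α = uNm α :=
  uMe_eq_uNm_general hunc hinit hmeas
end
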